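/- Let q be a prime power, a, b nonnegative integers with a, b ≤ q - 2, and let f ∈ F_q[x,y] be a nonzero polynomial with deg_x f ≤ a and deg_y f ≤ b. Then f has at most a(q-1) + b(q-1) - ab zeros in (F_q^×)². -/

import Mathlib

/-!
Write `f` as a polynomial in `x` whose coefficients are polynomials in `y`, and fix a nonzero
coefficient `c(y)`; it vanishes at some `β ≤ b` units `y`. Over those `y` count all `q - 1` values
of `x`; for every other `y`, `f(·, y)` is a nonzero polynomial of degree at most `a`, so it has at
most `a` roots. Hence the number of zeros is at most
`β(q - 1) + (q - 1 - β)a = a(q - 1) + β(q - 1 - a) ≤ a(q - 1) + b(q - 1 - a)`.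
-/

open MvPolynomial

/-- Evaluation of a polynomial in two variables at all points of the torus
`(F^×)²`, as a linear map. -/
noncomputable def evalTorus (F : Type) [Field F] :
    MvPolynomial (Fin 2) F →ₗ[F] ((Fˣ × Fˣ) → F) :=
  LinearMap.pi fun t => (aeval ![((t.1 : F)), ((t.2 : F))]).toLinearMap

open Finset

theorem Finset.sum_le_card_mul_add_card_mul_tsub {ι : Type*} [DecidableEq ι] {s B : Finset ι}
    {g : ι → ℕ} {a M : ℕ} (hB : ∀ i ∈ B, g i ≤ M) (hout : ∀ i ∈ s, i ∉ B → g i ≤ a) :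
    ∑ i ∈ s, g i ≤ #s * a + #B * (M - a) :=
  calc ∑ i ∈ s, g i
      ≤ ∑ i ∈ s, (a + if i ∈ B then M - a else 0) := by
        refine sum_le_sum fun i hi => ?_
        split_ifs with hiB
        · have := hB i hiB
          omega
        · simpa using hout i hi hiB
    _ = #s * a + #(s ∩ B) * (M - a) := by
        rw [sum_add_distrib, sum_ite_mem]
        simp
    _ ≤ #s * a + #B * (M - a) := by
        gcongr
        exact inter_subset_right

theorem Polynomial.card_filter_units_eval_eq_zero_le {R : Type*} [CommRing R] [IsDomain R]
    [Fintype Rˣ] [DecidableEq R] {p : Polynomial R} (hp : p ≠ 0) :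
    #{u : Rˣ | p.eval (u : R) = 0} ≤ p.natDegree :=
  calc #{u : Rˣ | p.eval (u : R) = 0}
      ≤ #p.roots.toFinset :=
        card_le_card_of_injOn Units.val (fun u hu => by simp_all) Units.val_injective.injOn
    _ ≤ p.natDegree := p.roots.toFinset_card_le.trans p.card_roots'

namespace MvPolynomial

variable {R : Type*} [CommRing R] {n : ℕ}

noncomputable def slice (f : MvPolynomial (Fin (n + 1)) R) (s : Fin n → R) : Polynomial R :=
  (finSuccEquiv R n f).map (eval s)

theorem eval_slice (f : MvPolynomial (Fin (n + 1)) R) (s : Fin n → R) (x : R) :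
    (f.slice s).eval x = eval (Fin.cons x s) f :=
  (eval_eq_eval_mv_eval' s x f).symm

theorem natDegree_slice_le (f : MvPolynomial (Fin (n + 1)) R) (s : Fin n → R) :
    (f.slice s).natDegree ≤ f.degreeOf 0 :=
  Polynomial.natDegree_map_le.trans (natDegree_finSuccEquiv f).le

theorem slice_ne_zero_of_eval_coeff_ne_zero {f : MvPolynomial (Fin (n + 1)) R}
    {s : Fin n → R} {i : ℕ} (h : eval s ((finSuccEquiv R n f).coeff i) ≠ 0) :
    f.slice s ≠ 0 := fun hf => h <| by
  rw [← Polynomial.coeff_map, ← slice, hf, Polynomial.coeff_zero]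

theorem slice_ne_zero {f : MvPolynomial (Fin 1) R} (hf : f ≠ 0) (s : Fin 0 → R) :
    f.slice s ≠ 0 := by
  have hinj : Function.Injective (eval s) :=
    (aeval_injective_iff_of_isEmpty (R := R) (S₁ := R)).mpr Function.injective_id
  rwa [slice, Ne, Polynomial.map_eq_zero_iff hinj, EmbeddingLike.map_eq_zero_iff]

variable [IsDomain R] [Fintype Rˣ] [DecidableEq R]

theorem card_filter_units_eval_cons_eq_zero_le {f : MvPolynomial (Fin (n + 1)) R}
    {s : Fin n → R} (hf : f.slice s ≠ 0) :
    #{x : Rˣ | eval (Fin.cons (x : R) s) f = 0} ≤ f.degreeOf 0 := by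
  simp_rw [← eval_slice]
  exact (Polynomial.card_filter_units_eval_eq_zero_le hf).trans (natDegree_slice_le f s)

theorem card_filter_units_prod_eval_eq_zero_le {f : MvPolynomial (Fin 2) R} (hf : f ≠ 0)
    {a b : ℕ} (hdx : f.degreeOf 0 ≤ a) (hdy : f.degreeOf 1 ≤ b) :
    #{t : Rˣ × Rˣ | eval ![(t.1 : R), t.2] f = 0} ≤
      Fintype.card Rˣ * a + b * (Fintype.card Rˣ - a) := by
  obtain ⟨i, hc⟩ : ∃ i, (finSuccEquiv R 1 f).coeff i ≠ 0 := by
    by_contra! h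
    exact hf <| (map_eq_zero_iff _ (finSuccEquiv R 1).injective).mp (Polynomial.ext h)
  set c := (finSuccEquiv R 1 f).coeff i
  have hbad : #{y : Rˣ | eval ![(y : R)] c = 0} ≤ b :=
    calc #{y : Rˣ | eval ![(y : R)] c = 0}
        ≤ c.degreeOf 0 := card_filter_units_eval_cons_eq_zero_le (slice_ne_zero hc ![])
      _ ≤ f.degreeOf 1 := degreeOf_coeff_finSuccEquiv f 0 i
      _ ≤ b := hdy
  calc #{t : Rˣ × Rˣ | eval ![(t.1 : R), t.2] f = 0}
      = ∑ y : Rˣ, #{x : Rˣ | eval ![(x : R), y] f = 0} := by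
        simp only [card_filter, Fintype.sum_prod_type_right]
    _ ≤ #(univ : Finset Rˣ) * a + #{y : Rˣ | eval ![(y : R)] c = 0} * (Fintype.card Rˣ - a) :=
        sum_le_card_mul_add_card_mul_tsub (fun y _ => card_filter_le _ _)
          fun y _ hy => (card_filter_units_eval_cons_eq_zero_le
            (slice_ne_zero_of_eval_coeff_ne_zero (by simpa using hy))).trans hdx
    _ ≤ Fintype.card Rˣ * a + b * (Fintype.card Rˣ - a) := by
        rw [card_univ]
        gcongr

end MvPolynomial

theorem evalTorus_apply (F : Type) [Field F] (f : MvPolynomial (Fin 2) F) (t : Fˣ × Fˣ) :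
    evalTorus F f t = eval ![(t.1 : F), t.2] f := by
  simp [evalTorus]

theorem zeros_bound_bidegree_general (F : Type) [Field F] [Fintype F]
    (a b : ℕ) (haq : a ≤ Fintype.card F - 2)
    (f : MvPolynomial (Fin 2) F) (hf : f ≠ 0)
    (hdx : f.degreeOf 0 ≤ a) (hdy : f.degreeOf 1 ≤ b) :
    (Nat.card {t : Fˣ × Fˣ // evalTorus F f t = 0} : ℤ) ≤
      (a : ℤ) * (Fintype.card F - 1) + (b : ℤ) * (Fintype.card F - 1)
        - (a : ℤ) * b := by
  classical
  have hq : 2 ≤ Fintype.card F := Fintype.one_lt_card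
  have hcount := card_filter_units_prod_eval_eq_zero_le hf hdx hdy
  rw [Fintype.card_units] at hcount
  simp_rw [Nat.card_eq_fintype_card, Fintype.card_subtype, evalTorus_apply]
  calc _ ≤ (((Fintype.card F - 1) * a + b * (Fintype.card F - 1 - a) : ℕ) : ℤ) := by
        exact_mod_cast hcount
    _ = _ := by
        push_cast [Nat.cast_sub (by omega : a ≤ Fintype.card F - 1),
          Nat.cast_sub (by omega : 1 ≤ Fintype.card F)]
        ring

/-- A nonzero polynomial with x-degree at most `a` and y-degree at most `b`,
`a, b ≤ q - 2`, has at most `a(q-1) + b(q-1) - ab` zeros in the torus. -/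
theorem zeros_bound_bidegree (F : Type) [Field F] [Fintype F] [DecidableEq F]
    (a b : ℕ) (haq : a ≤ Fintype.card F - 2) (hbq : b ≤ Fintype.card F - 2)
    (f : MvPolynomial (Fin 2) F) (hf : f ≠ 0)
    (hdx : f.degreeOf 0 ≤ a) (hdy : f.degreeOf 1 ≤ b) :
    (Nat.card {t : Fˣ × Fˣ // evalTorus F f t = 0} : ℤ) ≤
      (a : ℤ) * (Fintype.card F - 1) + (b : ℤ) * (Fintype.card F - 1)
        - (a : ℤ) * b :=
  zeros_bound_bidegree_general F a b haq f hf hdx hdy
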